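/- arXiv:2210.01803 — 3 statements merged into one kernel-verified Lean document; each statement's English description precedes it below -/
import Mathlib

section
/- Let c(w) = (λ/2)‖w‖² + L(w) where L : ℝⁿ → ℝ is convex and differentiable with ∇L Lipschitz with constant ℓ. If the step size η satisfies η ≤ 4/(2ℓ + 3λ), then the gradient descent map φ(w) = w - η∇c(w) is Lipschitz with constant at most 1 - ηλ/2, hence a contraction. -/
open scoped RealInnerProductSpace

variable {n : ℕ}

private lemma curve_deriv (L : EuclideanSpace ℝ (Fin n) → ℝ)
    (g : EuclideanSpace ℝ (Fin n) → EuclideanSpace ℝ (Fin n))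
    (hLgrad : ∀ w, HasGradientAt L (g w) w)
    (x d : EuclideanSpace ℝ (Fin n)) (t : ℝ) :
    HasDerivAt (fun s : ℝ => L (x + s • d)) ⟪g (x + t • d), d⟫ t := by
  have h1 : HasDerivAt (fun s : ℝ => x + s • d) d t := by
    simpa using ((hasDerivAt_id t).smul_const d).const_add x
  have h2 := (hasGradientAt_iff_hasFDerivAt.mp (hLgrad (x + t • d)))
  have := h2.comp_hasDerivAt t h1
  simpa [InnerProductSpace.toDual_apply_apply, Function.comp_def] using this

private lemma grad_ineq (L : EuclideanSpace ℝ (Fin n) → ℝ)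
    (g : EuclideanSpace ℝ (Fin n) → EuclideanSpace ℝ (Fin n))
    (hLconv : ConvexOn ℝ Set.univ L)
    (hLgrad : ∀ w, HasGradientAt L (g w) w)
    (x y : EuclideanSpace ℝ (Fin n)) :
    L x + ⟪g x, y - x⟫ ≤ L y := by
  set d := y - x with hd
  have hφconv : ConvexOn ℝ Set.univ (fun t : ℝ => L (x + t • d)) := by
    have := hLconv.comp_affineMap (AffineMap.lineMap x y)
    have heq : (fun t : ℝ => L (x + t • d)) = L ∘ (AffineMap.lineMap x y) := by
      funext t
      simp [AffineMap.lineMap_apply, hd, add_comm]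
    rw [heq]
    simpa using this
  have hderiv : HasDerivAt (fun t : ℝ => L (x + t • d)) ⟪g x, d⟫ 0 := by
    have := curve_deriv L g hLgrad x d 0
    simpa using this
  have hs := hφconv.le_slope_of_hasDerivAt (Set.mem_univ (0:ℝ)) (Set.mem_univ (1:ℝ))
    one_pos hderiv
  rw [slope_def_field] at hs
  simp only [one_smul, zero_smul, add_zero, sub_zero, div_one] at hs
  have h1 : x + d = y := by rw [hd]; abel
  rw [h1] at hs
  linarith

private lemma descent (L : EuclideanSpace ℝ (Fin n) → ℝ)
    (g : EuclideanSpace ℝ (Fin n) → EuclideanSpace ℝ (Fin n))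
    (hLgrad : ∀ w, HasGradientAt L (g w) w)
    (ℓ : ℝ) (hℓ : 0 ≤ ℓ)
    (hglip : ∀ x y, ‖g x - g y‖ ≤ ℓ * ‖x - y‖)
    (x y : EuclideanSpace ℝ (Fin n)) :
    L y ≤ L x + ⟪g x, y - x⟫ + ℓ / 2 * ‖y - x‖ ^ 2 := by
  set d := y - x with hd
  set ψ : ℝ → ℝ := fun t => L (x + t • d) - t * ⟪g x, d⟫ - ℓ / 2 * t ^ 2 * ‖d‖ ^ 2 with hψ
  have hψderiv : ∀ t : ℝ, HasDerivAt ψ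
      (⟪g (x + t • d), d⟫ - ⟪g x, d⟫ - ℓ * t * ‖d‖ ^ 2) t := by
    intro t
    have h1 := curve_deriv L g hLgrad x d t
    have h2 : HasDerivAt (fun t : ℝ => t * ⟪g x, d⟫) ⟪g x, d⟫ t := by
      simpa using (hasDerivAt_id t).mul_const ⟪g x, d⟫
    have h3 : HasDerivAt (fun t : ℝ => ℓ / 2 * t ^ 2 * ‖d‖ ^ 2)
        (ℓ * t * ‖d‖ ^ 2) t := by
      have := ((hasDerivAt_pow 2 t).const_mul (ℓ / 2)).mul_const (‖d‖ ^ 2)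
      exact this.congr_deriv (by simp only [Nat.cast_ofNat, Nat.add_one_sub_one, pow_one]; ring)
    exact (h1.sub h2).sub h3
  have hanti : AntitoneOn ψ (Set.Icc (0:ℝ) 1) := by
    apply antitoneOn_of_hasDerivWithinAt_nonpos (convex_Icc 0 1)
      (fun t _ => ((hψderiv t).continuousAt).continuousWithinAt)
      (fun t _ => ((hψderiv t).hasDerivWithinAt))
    intro t ht
    rw [interior_Icc] at ht
    have ht0 : (0:ℝ) < t := ht.1
    have hcs : ⟪g (x + t • d) - g x, d⟫ ≤ ‖g (x + t • d) - g x‖ * ‖d‖ :=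
      real_inner_le_norm _ _
    have hlip : ‖g (x + t • d) - g x‖ ≤ ℓ * (t * ‖d‖) := by
      have := hglip (x + t • d) x
      simpa [norm_smul, abs_of_pos ht0] using this
    have : ⟪g (x + t • d) - g x, d⟫ ≤ ℓ * t * ‖d‖ ^ 2 := by
      calc ⟪g (x + t • d) - g x, d⟫ ≤ ‖g (x + t • d) - g x‖ * ‖d‖ := hcs
        _ ≤ ℓ * (t * ‖d‖) * ‖d‖ := by
            apply mul_le_mul_of_nonneg_right hlip (norm_nonneg d)
        _ = ℓ * t * ‖d‖ ^ 2 := by ring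
    rw [inner_sub_left] at this
    linarith
  have h01 := hanti (Set.mem_Icc.mpr ⟨le_refl 0, zero_le_one⟩)
    (Set.mem_Icc.mpr ⟨zero_le_one, le_refl 1⟩) zero_le_one
  have hxy : x + (1:ℝ) • d = y := by rw [one_smul, hd]; abel
  have hψ1 : ψ 1 = L y - ⟪g x, d⟫ - ℓ / 2 * ‖d‖ ^ 2 := by
    simp only [hψ, hxy, one_pow, one_mul, mul_one]
  have hψ0 : ψ 0 = L x := by simp [hψ]
  rw [hψ1, hψ0] at h01
  linarith

private lemma strong_ineq (L : EuclideanSpace ℝ (Fin n) → ℝ)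
    (g : EuclideanSpace ℝ (Fin n) → EuclideanSpace ℝ (Fin n))
    (hLconv : ConvexOn ℝ Set.univ L)
    (hLgrad : ∀ w, HasGradientAt L (g w) w)
    (ℓ : ℝ) (hℓ : 0 < ℓ)
    (hglip : ∀ x y, ‖g x - g y‖ ≤ ℓ * ‖x - y‖)
    (x y : EuclideanSpace ℝ (Fin n)) :
    L x + ⟪g x, y - x⟫ + ‖g y - g x‖ ^ 2 / (2 * ℓ) ≤ L y := by
  set G := g y - g x with hG
  set z := y - (1 / ℓ) • G with hz
  have h1 := grad_ineq L g hLconv hLgrad x z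
  have h2 := descent L g hLgrad ℓ hℓ.le hglip y z
  have hzy : z - y = -((1 / ℓ) • G) := by rw [hz]; abel
  have hzx : z - x = (y - x) - (1 / ℓ) • G := by rw [hz]; abel
  have e1 : ⟪g y, z - y⟫ = -(1 / ℓ) * ⟪g y, G⟫ := by
    rw [hzy, inner_neg_right, real_inner_smul_right]; ring
  have e2 : ‖z - y‖ ^ 2 = (1 / ℓ) ^ 2 * ‖G‖ ^ 2 := by
    rw [hzy, norm_neg, norm_smul]
    simp [abs_of_pos (one_div_pos.mpr hℓ), mul_pow]
  have e3 : ⟪g x, z - x⟫ = ⟪g x, y - x⟫ - (1 / ℓ) * ⟪g x, G⟫ := by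
    rw [hzx, inner_sub_right, real_inner_smul_right]
  have e4 : ⟪g y, G⟫ - ⟪g x, G⟫ = ‖G‖ ^ 2 := by
    rw [← inner_sub_left, ← hG, real_inner_self_eq_norm_sq]
  rw [e1, e2] at h2
  rw [e3] at h1
  have hℓ' : (0:ℝ) < 2 * ℓ := by linarith
  have expand : ℓ / 2 * ((1 / ℓ) ^ 2 * ‖G‖ ^ 2) = ‖G‖ ^ 2 / (2 * ℓ) := by
    field_simp
  rw [expand] at h2
  have e5 : (1 / ℓ) * ⟪g y, G⟫ - (1 / ℓ) * ⟪g x, G⟫ = (1 / ℓ) * ‖G‖ ^ 2 := by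
    rw [← mul_sub, e4]
  have e6 : (1 / ℓ) * ‖G‖ ^ 2 - ‖G‖ ^ 2 / (2 * ℓ) = ‖G‖ ^ 2 / (2 * ℓ) := by
    field_simp
    ring
  linarith [h1, h2, e5, e6]

private lemma coco (L : EuclideanSpace ℝ (Fin n) → ℝ)
    (g : EuclideanSpace ℝ (Fin n) → EuclideanSpace ℝ (Fin n))
    (hLconv : ConvexOn ℝ Set.univ L)
    (hLgrad : ∀ w, HasGradientAt L (g w) w)
    (ℓ : ℝ) (hℓ : 0 ≤ ℓ)
    (hglip : ∀ x y, ‖g x - g y‖ ≤ ℓ * ‖x - y‖)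
    (w v : EuclideanSpace ℝ (Fin n)) :
    ‖g w - g v‖ ^ 2 ≤ ℓ * ⟪g w - g v, w - v⟫ := by
  rcases eq_or_lt_of_le hℓ with h0 | hpos
  · have : ‖g w - g v‖ ≤ 0 := by
      have := hglip w v
      rw [← h0] at this
      simpa using this
    have hGz : g w - g v = 0 := by
      have := norm_nonneg (g w - g v)
      exact norm_eq_zero.mp (le_antisymm ‹_› ‹_›)
    simp [hGz]
  · have h1 := strong_ineq L g hLconv hLgrad ℓ hpos hglip w v
    have h2 := strong_ineq L g hLconv hLgrad ℓ hpos hglip v w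
    have hswap : ‖g w - g v‖ = ‖g v - g w‖ := norm_sub_rev _ _
    have e1 : ⟪g w, v - w⟫ = -⟪g w, w - v⟫ := by
      rw [show v - w = -(w - v) by abel, inner_neg_right]
    have e2 : ⟪g w - g v, w - v⟫ = ⟪g w, w - v⟫ - ⟪g v, w - v⟫ := inner_sub_left _ _ _
    rw [hswap] at h2
    rw [e1] at h1
    have hsum : ‖g v - g w‖ ^ 2 / (2 * ℓ) + ‖g v - g w‖ ^ 2 / (2 * ℓ)
        ≤ ⟪g w, w - v⟫ - ⟪g v, w - v⟫ := by linarith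
    have : ‖g v - g w‖ ^ 2 / ℓ ≤ ⟪g w - g v, w - v⟫ := by
      rw [e2]
      have : ‖g v - g w‖ ^ 2 / (2 * ℓ) + ‖g v - g w‖ ^ 2 / (2 * ℓ)
          = ‖g v - g w‖ ^ 2 / ℓ := by field_simp; ring
      linarith
    rw [← hswap] at this
    rw [div_le_iff₀ hpos] at this
    linarith [this]

set_option maxHeartbeats 1000000 in
/-- Gradient descent on the regularized cost `c w = (λ/2)‖w‖² + L w` with a
convex `L` whose gradient is `ℓ`-Lipschitz is a contraction with constant
`1 - ηλ/2` provided `η ≤ 4/(2ℓ + 3λ)`. -/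
theorem gradient_descent_contraction {n : ℕ}
    (L : EuclideanSpace ℝ (Fin n) → ℝ)
    (g : EuclideanSpace ℝ (Fin n) → EuclideanSpace ℝ (Fin n))
    (hLconv : ConvexOn ℝ Set.univ L)
    (hLgrad : ∀ w, HasGradientAt L (g w) w)
    (ℓ lam η : ℝ) (hℓ : 0 ≤ ℓ) (hlam : 0 < lam) (hη : 0 < η)
    (hglip : ∀ x y, ‖g x - g y‖ ≤ ℓ * ‖x - y‖)
    (hstep : η ≤ 4 / (2 * ℓ + 3 * lam)) :
    ∀ w v : EuclideanSpace ℝ (Fin n),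
      ‖(w - η • (lam • w + g w)) - (v - η • (lam • v + g v))‖
        ≤ (1 - η * lam / 2) * ‖w - v‖ := by
  intro w v
  set d := w - v with hd
  set G := g w - g v with hG
  have key : (w - η • (lam • w + g w)) - (v - η • (lam • v + g v))
      = (1 - η * lam) • d - η • G := by
    simp only [hd, hG, smul_add, smul_smul, sub_smul, one_smul, smul_sub]
    abel
  have hpos : (0:ℝ) < 2 * ℓ + 3 * lam := by linarith
  have hstep' : η * (2 * ℓ + 3 * lam) ≤ 4 := by
    rw [le_div_iff₀ hpos] at hstep; linarith
  have hηℓ : 0 ≤ η * ℓ := mul_nonneg hη.le hℓ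
  have hηlam : 0 < η * lam := mul_pos hη hlam
  have h43 : 3 * (η * lam) ≤ 4 := by nlinarith
  have hc2 : (0:ℝ) ≤ 1 - η * lam / 2 := by linarith
  -- inner products
  set s : ℝ := ⟪d, G⟫ with hs_def
  have hmono : 0 ≤ s := by
    have h1 := grad_ineq L g hLconv hLgrad w v
    have h2 := grad_ineq L g hLconv hLgrad v w
    have e1 : ⟪g w, v - w⟫ = -⟪g w, d⟫ := by
      rw [show v - w = -d by rw [hd]; abel, inner_neg_right]
    have e2 : ⟪g v, w - v⟫ = ⟪g v, d⟫ := by rw [hd]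
    rw [e1] at h1; rw [e2] at h2
    have e3 : s = ⟪g w, d⟫ - ⟪g v, d⟫ := by
      rw [hs_def, hG, inner_sub_right, real_inner_comm d (g w), real_inner_comm d (g v)]
    linarith
  have hcoco : ‖G‖ ^ 2 ≤ ℓ * s := by
    have := coco L g hLconv hLgrad ℓ hℓ hglip w v
    rwa [← hG, ← hd, real_inner_comm, ← hs_def] at this
  have hsD : s ≤ ℓ * ‖d‖ ^ 2 := by
    have h1 : s ≤ ‖d‖ * ‖G‖ := real_inner_le_norm d G
    have h2 : ‖G‖ ≤ ℓ * ‖d‖ := by rw [hG, hd]; exact hglip w v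
    nlinarith [norm_nonneg d, norm_nonneg G]
  have hnormsq : ‖(1 - η * lam) • d - η • G‖ ^ 2
      = (1 - η * lam) ^ 2 * ‖d‖ ^ 2 - 2 * ((1 - η * lam) * η * s) + η ^ 2 * ‖G‖ ^ 2 := by
    rw [norm_sub_sq_real, norm_smul, norm_smul, real_inner_smul_left,
      real_inner_smul_right, mul_pow, mul_pow]
    simp [Real.norm_eq_abs, sq_abs, hs_def]
    ring
  have hsq : ‖(1 - η * lam) • d - η • G‖ ^ 2 ≤ ((1 - η * lam / 2) * ‖d‖) ^ 2 := by
    rw [hnormsq, mul_pow]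
    rcases le_or_gt (η * (ℓ + 2 * lam)) 2 with hc | hc
    · have h3' : 0 ≤ η * s * (2 - η * (ℓ + 2 * lam)) :=
        mul_nonneg (mul_nonneg hη.le hmono) (by linarith)
      have h4 : 0 ≤ η ^ 2 * (ℓ * s - ‖G‖ ^ 2) :=
        mul_nonneg (sq_nonneg η) (by linarith)
      have h2' : 0 ≤ η * lam * (4 - 3 * (η * lam)) * ‖d‖ ^ 2 :=
        mul_nonneg (mul_nonneg hηlam.le (by linarith)) (sq_nonneg _)
      linarith [h3', h4, h2']
    · have h3' : 0 ≤ η * (η * (ℓ + 2 * lam) - 2) * (ℓ * ‖d‖ ^ 2 - s) :=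
        mul_nonneg (mul_nonneg hη.le (by linarith)) (by linarith)
      have h4 : 0 ≤ η ^ 2 * (ℓ * s - ‖G‖ ^ 2) :=
        mul_nonneg (sq_nonneg η) (by linarith)
      have h2' : 0 ≤ η * ‖d‖ ^ 2 * ((4 - η * (2 * ℓ + 3 * lam)) * (2 * ℓ + lam)) :=
        mul_nonneg (mul_nonneg hη.le (sq_nonneg _))
          (mul_nonneg (by linarith) (by linarith))
      linarith [h3', h4, h2']
  rw [key]
  have hrhs : 0 ≤ (1 - η * lam / 2) * ‖d‖ := mul_nonneg hc2 (norm_nonneg d)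
  calc ‖(1 - η * lam) • d - η • G‖
      = Real.sqrt (‖(1 - η * lam) • d - η • G‖ ^ 2) := (Real.sqrt_sq (norm_nonneg _)).symm
    _ ≤ Real.sqrt (((1 - η * lam / 2) * ‖d‖) ^ 2) := Real.sqrt_le_sqrt hsq
    _ = (1 - η * lam / 2) * ‖d‖ := Real.sqrt_sq hrhs
end

section
/- Let u : ℝ → ℝ be monotone increasing and Lipschitz with constant c*, let M be a real k×m matrix with spectral norm bound ‖MᵀM‖₂ ≤ λ/(2c*), and let η, λ > 0. Then the map φ(w) = (1-ηλ)w - η Mᵀ u(B + M w) (with u applied componentwise) satisfies ‖φ(w) - φ(v)‖ ≤ (1 - ηλ/2)‖w - v‖ for all w, v ∈ ℝᵐ and any fixed B ∈ ℝᵏ, provided ηλ ≤ 1. -/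
open Matrix
open RealInnerProductSpace

set_option maxHeartbeats 1000000 in
/-- The update map `φ(w) = (1-ηλ)w - ηMᵀ u(B + Mw)` (with `u` applied
componentwise) is a contraction with constant `1 - ηλ/2` when
`‖MᵀM‖₂ ≤ λ/(2c*)`, `u` is increasing and `c*`-Lipschitz, and `ηλ ≤ 1`. -/
theorem shared_embedding_update_contraction {k m : ℕ}
    (u : ℝ → ℝ) (cstar : ℝ) (hcstar : 0 < cstar)
    (hu_mono : Monotone u)
    (hu_lip : ∀ x y : ℝ, |u x - u y| ≤ cstar * |x - y|)
    (M : Matrix (Fin k) (Fin m) ℝ) (η lam : ℝ) (hη : 0 < η) (hlam : 0 < lam)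
    (hηlam : η * lam ≤ 1)
    (hspec : ∀ v : EuclideanSpace ℝ (Fin m),
      ‖Matrix.toEuclideanLin (Mᵀ * M) v‖ ≤ (lam / (2 * cstar)) * ‖v‖)
    (B : EuclideanSpace ℝ (Fin k)) :
    ∀ w v : EuclideanSpace ℝ (Fin m),
      ‖((1 - η * lam) • w
          - η • Matrix.toEuclideanLin Mᵀ
              (WithLp.toLp 2 (fun i => u ((B + Matrix.toEuclideanLin M w) i))))
        - ((1 - η * lam) • v
          - η • Matrix.toEuclideanLin Mᵀ
              (WithLp.toLp 2 (fun i => u ((B + Matrix.toEuclideanLin M v) i))))‖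
        ≤ (1 - η * lam / 2) * ‖w - v‖ := by
  intro w v
  -- per-coordinate facts about u
  have key : ∀ x y : ℝ, 0 ≤ (x - y) * (u x - u y) ∧
      (u x - u y) ^ 2 ≤ cstar * ((x - y) * (u x - u y)) ∧
      (x - y) * (u x - u y) ≤ cstar * (x - y) ^ 2 := by
    intro x y
    have hs : 0 ≤ (x - y) * (u x - u y) := by
      rcases le_total x y with h | h
      · have := hu_mono h; nlinarith
      · have := hu_mono h; nlinarith
    have hl := hu_lip x y
    have habs : (x - y) * (u x - u y) = |x - y| * |u x - u y| := by
      rw [← abs_mul, abs_of_nonneg hs]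
    refine ⟨hs, ?_, ?_⟩
    · nlinarith [sq_abs (u x - u y), abs_nonneg (u x - u y), abs_nonneg (x - y),
        mul_le_mul_of_nonneg_right hl (abs_nonneg (u x - u y))]
    · nlinarith [sq_abs (x - y), abs_nonneg (x - y),
        mul_le_mul_of_nonneg_right hl (abs_nonneg (x - y))]
  set d : EuclideanSpace ℝ (Fin m) := w - v with hd
  set aw : EuclideanSpace ℝ (Fin k) := WithLp.toLp 2 (fun i => u ((B + Matrix.toEuclideanLin M w) i)) with haw
  set av : EuclideanSpace ℝ (Fin k) := WithLp.toLp 2 (fun i => u ((B + Matrix.toEuclideanLin M v) i)) with hav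
  set a : EuclideanSpace ℝ (Fin k) := aw - av with ha
  have hadj : Matrix.toEuclideanLin Mᵀ = LinearMap.adjoint (Matrix.toEuclideanLin M) := by
    rw [← Matrix.toEuclideanLin_conjTranspose_eq_adjoint,
      Matrix.conjTranspose_eq_transpose_of_trivial]
  have hcomp : ∀ x : EuclideanSpace ℝ (Fin m), Matrix.toEuclideanLin (Mᵀ * M) x
      = Matrix.toEuclideanLin Mᵀ (Matrix.toEuclideanLin M x) := by
    intro x; simp [Matrix.toEuclideanLin_apply, Matrix.mulVec_mulVec]
  -- rewrite the difference
  have hΔ : ((1 - η * lam) • w - η • Matrix.toEuclideanLin Mᵀ aw)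
      - ((1 - η * lam) • v - η • Matrix.toEuclideanLin Mᵀ av)
      = (1 - η * lam) • d - η • Matrix.toEuclideanLin Mᵀ a := by
    rw [hd, ha, map_sub, smul_sub, smul_sub]; abel
  rw [hΔ]
  set Md : EuclideanSpace ℝ (Fin k) := Matrix.toEuclideanLin M d with hMd
  set Ta : EuclideanSpace ℝ (Fin m) := Matrix.toEuclideanLin Mᵀ a with hTa
  -- coordinates of Md and a
  have hMdi : ∀ i, Md i = (B + Matrix.toEuclideanLin M w) i - (B + Matrix.toEuclideanLin M v) i := by
    intro i
    simp [hMd, hd, map_sub]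
  have hai : ∀ i, a i = u ((B + Matrix.toEuclideanLin M w) i) - u ((B + Matrix.toEuclideanLin M v) i) := by
    intro i; simp [ha, haw, hav]
  set S : ℝ := inner ℝ Md a with hS
  have hSsum : S = ∑ i, Md i * a i := by
    rw [hS]; simp [PiLp.inner_apply, RCLike.inner_apply, mul_comm]
  have hS0 : 0 ≤ S := by
    rw [hSsum]
    apply Finset.sum_nonneg
    intro i _
    rw [hMdi i, hai i]
    exact (key _ _).1
  have hA : ‖a‖ ^ 2 ≤ cstar * S := by
    have h1 : ‖a‖ ^ 2 = ∑ i, a i * a i := by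
      rw [EuclideanSpace.norm_sq_eq]; simp only [Real.norm_eq_abs, abs_mul_abs_self, pow_two]
    rw [h1, hSsum, Finset.mul_sum]
    apply Finset.sum_le_sum
    intro i _
    rw [hMdi i, hai i]
    have h2 := (key ((B + Matrix.toEuclideanLin M w) i) ((B + Matrix.toEuclideanLin M v) i)).2.1
    rw [pow_two] at h2
    exact h2
  have hSU : S ≤ cstar * ‖Md‖ ^ 2 := by
    have h1 : ‖Md‖ ^ 2 = ∑ i, Md i * Md i := by
      rw [EuclideanSpace.norm_sq_eq]; simp only [Real.norm_eq_abs, abs_mul_abs_self, pow_two]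
    rw [h1, hSsum, Finset.mul_sum]
    apply Finset.sum_le_sum
    intro i _
    rw [hMdi i, hai i]
    have h2 := (key ((B + Matrix.toEuclideanLin M w) i) ((B + Matrix.toEuclideanLin M v) i)).2.2
    rw [pow_two] at h2
    exact h2
  -- ‖Md‖² ≤ (lam/(2cstar))‖d‖²
  have hMdn : ‖Md‖ ^ 2 ≤ (lam / (2 * cstar)) * ‖d‖ ^ 2 := by
    have h1 : ‖Md‖ ^ 2 = ⟪Matrix.toEuclideanLin (Mᵀ * M) d, d⟫ := by
      rw [hcomp, hadj, LinearMap.adjoint_inner_left, ← hMd, real_inner_self_eq_norm_sq]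
    calc ‖Md‖ ^ 2 = ⟪Matrix.toEuclideanLin (Mᵀ * M) d, d⟫ := h1
      _ ≤ ‖Matrix.toEuclideanLin (Mᵀ * M) d‖ * ‖d‖ := real_inner_le_norm _ _
      _ ≤ (lam / (2 * cstar)) * ‖d‖ * ‖d‖ :=
          mul_le_mul_of_nonneg_right (hspec d) (norm_nonneg _)
      _ = (lam / (2 * cstar)) * ‖d‖ ^ 2 := by ring
  -- operator norm bound for Mᵀ
  have hTan : ‖Ta‖ ^ 2 ≤ (lam / (2 * cstar)) * ‖a‖ ^ 2 := by
    set L : EuclideanSpace ℝ (Fin m) →L[ℝ] EuclideanSpace ℝ (Fin k) :=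
      LinearMap.toContinuousLinearMap (Matrix.toEuclideanLin M) with hL
    have hLadj : ∀ x, ContinuousLinearMap.adjoint L x = Matrix.toEuclideanLin Mᵀ x := by
      intro x
      rw [hadj, hL, ← LinearMap.adjoint_toContinuousLinearMap]
      rfl
    have hnn : (0:ℝ) ≤ lam / (2 * cstar) := by positivity
    have hcompL : ‖ContinuousLinearMap.adjoint L ∘L L‖ ≤ lam / (2 * cstar) := by
      apply ContinuousLinearMap.opNorm_le_bound _ hnn
      intro x
      have : (ContinuousLinearMap.adjoint L ∘L L) x = Matrix.toEuclideanLin (Mᵀ * M) x := by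
        rw [hcomp]
        simp only [ContinuousLinearMap.comp_apply, hLadj]
        rfl
      rw [this]
      exact hspec x
    have hLn : ‖L‖ * ‖L‖ ≤ lam / (2 * cstar) := by
      rw [← ContinuousLinearMap.norm_adjoint_comp_self]
      exact hcompL
    have hTa2 : ‖Ta‖ ≤ ‖L‖ * ‖a‖ := by
      have : Ta = ContinuousLinearMap.adjoint L a := by rw [hLadj, hTa]
      rw [this]
      calc ‖ContinuousLinearMap.adjoint L a‖ ≤ ‖ContinuousLinearMap.adjoint L‖ * ‖a‖ :=
            ContinuousLinearMap.le_opNorm _ _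
        _ = ‖L‖ * ‖a‖ := by rw [LinearIsometryEquiv.norm_map]
    nlinarith [norm_nonneg Ta, norm_nonneg a, norm_nonneg L, hTa2, hLn,
      mul_le_mul hTa2 hTa2 (norm_nonneg Ta) (by positivity : (0:ℝ) ≤ ‖L‖ * ‖a‖)]
  -- expand the square
  have hinner : ⟪d, Ta⟫ = S := by
    rw [hTa, hadj, LinearMap.adjoint_inner_right, hS, hMd, real_inner_comm]
  clear_value d aw av a Md Ta S
  have hexp : ‖(1 - η * lam) • d - η • Ta‖ ^ 2
      = (1 - η * lam) ^ 2 * ‖d‖ ^ 2 - 2 * (1 - η * lam) * η * S + η ^ 2 * ‖Ta‖ ^ 2 := by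
    rw [norm_sub_sq_real]
    rw [norm_smul, norm_smul, real_inner_smul_left, real_inner_smul_right, hinner]
    simp only [Real.norm_eq_abs, mul_pow, sq_abs]
    ring
  -- combine
  have hdn : (0:ℝ) ≤ ‖d‖ := norm_nonneg d
  have hfac : (0:ℝ) ≤ 1 - η * lam / 2 := by nlinarith
  have h1t : (0:ℝ) ≤ 1 - η * lam := by nlinarith
  have hTan2 : η ^ 2 * ‖Ta‖ ^ 2 ≤ (η * lam) ^ 2 / 4 * ‖d‖ ^ 2 := by
    have hc : S ≤ lam / 2 * ‖d‖ ^ 2 := by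
      calc S ≤ cstar * ‖Md‖ ^ 2 := hSU
        _ ≤ cstar * ((lam / (2 * cstar)) * ‖d‖ ^ 2) :=
            mul_le_mul_of_nonneg_left hMdn (le_of_lt hcstar)
        _ = lam / 2 * ‖d‖ ^ 2 := by field_simp
    have h2 : ‖Ta‖ ^ 2 ≤ (lam / (2 * cstar)) * (cstar * S) :=
      le_trans hTan (mul_le_mul_of_nonneg_left hA (by positivity))
    have h3 : ‖Ta‖ ^ 2 ≤ lam / 2 * S := by
      calc ‖Ta‖ ^ 2 ≤ (lam / (2 * cstar)) * (cstar * S) := h2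
        _ = lam / 2 * S := by field_simp
    have h4 : ‖Ta‖ ^ 2 ≤ lam / 2 * (lam / 2 * ‖d‖ ^ 2) :=
      le_trans h3 (mul_le_mul_of_nonneg_left hc (by positivity))
    calc η ^ 2 * ‖Ta‖ ^ 2 ≤ η ^ 2 * (lam / 2 * (lam / 2 * ‖d‖ ^ 2)) :=
          mul_le_mul_of_nonneg_left h4 (sq_nonneg η)
      _ = (η * lam) ^ 2 / 4 * ‖d‖ ^ 2 := by ring
  have hsq : ‖(1 - η * lam) • d - η • Ta‖ ^ 2 ≤ ((1 - η * lam / 2) * ‖d‖) ^ 2 := by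
    rw [hexp]
    have hcross : 0 ≤ 2 * (1 - η * lam) * η * S := by positivity
    nlinarith [hTan2, hcross, sq_nonneg ‖d‖, h1t,
      mul_nonneg (mul_nonneg h1t (mul_pos hη hlam).le) (sq_nonneg ‖d‖)]
  nlinarith [norm_nonneg ((1 - η * lam) • d - η • Ta), hsq,
    mul_nonneg hfac hdn]
end

section
/- Let A be an irreducible entrywise-nonnegative square real matrix. Then the spectral radius ρ(A) is an eigenvalue of A and admits an eigenvector with all entries strictly positive (Perron–Frobenius). -/
open Matrix


section aux

variable {n : ℕ} (A : Matrix (Fin n) (Fin n) ℝ)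

/-- entries of powers of a nonneg matrix are nonneg -/
lemma pf_pow_nonneg (hA : ∀ i j, 0 ≤ A i j) (k : ℕ) : ∀ i j, 0 ≤ (A ^ k) i j := by
  induction k with
  | zero => intro i j; simp [Matrix.one_apply]; split <;> norm_num
  | succ k ih =>
    intro i j
    rw [pow_succ, Matrix.mul_apply]
    exact Finset.sum_nonneg fun l _ => mul_nonneg (ih i l) (hA l j)

/-- a strictly positive matrix commuting with A, polynomial in A -/
lemma pf_exists_B (hA : ∀ i j, 0 ≤ A i j)
    (hirred : ∀ i j : Fin n, ∃ k : ℕ, 0 < (A ^ k) i j) :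
    ∃ B : Matrix (Fin n) (Fin n) ℝ, (∀ i j, 0 < B i j) ∧ A * B = B * A := by
  classical
  set N : ℕ := Finset.univ.sup (fun p : Fin n × Fin n => (hirred p.1 p.2).choose) with hN
  refine ⟨∑ k ∈ Finset.range (N + 1), A ^ k, ?_, ?_⟩
  · intro i j
    have hk : (hirred i j).choose ∈ Finset.range (N + 1) := by
      refine Finset.mem_range.2 (Nat.lt_succ_of_le ?_)
      exact Finset.le_sup (f := fun p : Fin n × Fin n => (hirred p.1 p.2).choose)
        (Finset.mem_univ (i, j))
    have hpos : 0 < (A ^ (hirred i j).choose) i j := (hirred i j).choose_spec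
    have : (∑ k ∈ Finset.range (N + 1), A ^ k) i j
        = ∑ k ∈ Finset.range (N + 1), (A ^ k) i j := by
      simp [Matrix.sum_apply]
    rw [this]
    exact Finset.sum_pos' (fun k _ => pf_pow_nonneg A hA k i j) ⟨_, hk, hpos⟩
  · rw [Finset.mul_sum, Finset.sum_mul]
    exact Finset.sum_congr rfl fun k _ => by
      rw [← pow_succ', pow_succ]

end aux

section main
variable {n : ℕ}

-- the feasible set
def pfS (A : Matrix (Fin n) (Fin n) ℝ) : Set (ℝ × (Fin n → ℝ)) :=
  {p | 0 ≤ p.1 ∧ (∀ i, 0 ≤ p.2 i) ∧ (∑ i, p.2 i) = 1 ∧ ∀ i, p.1 * p.2 i ≤ A.mulVec p.2 i}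

lemma pfS_closed (A : Matrix (Fin n) (Fin n) ℝ) : IsClosed (pfS A) := by
  have h1 : IsClosed {p : ℝ × (Fin n → ℝ) | 0 ≤ p.1} := isClosed_le continuous_const continuous_fst
  have h2 : IsClosed {p : ℝ × (Fin n → ℝ) | ∀ i, 0 ≤ p.2 i} := by
    rw [Set.setOf_forall]
    refine isClosed_iInter fun i => isClosed_le continuous_const ?_
    exact (continuous_apply i).comp continuous_snd
  have h3 : IsClosed {p : ℝ × (Fin n → ℝ) | (∑ i, p.2 i) = 1} := by
    refine isClosed_eq ?_ continuous_const
    exact continuous_finset_sum _ fun i _ => (continuous_apply i).comp continuous_snd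
  have h4 : IsClosed {p : ℝ × (Fin n → ℝ) | ∀ i, p.1 * p.2 i ≤ A.mulVec p.2 i} := by
    rw [Set.setOf_forall]
    refine isClosed_iInter fun i => isClosed_le ?_ ?_
    · exact continuous_fst.mul ((continuous_apply i).comp continuous_snd)
    · have : (fun p : ℝ × (Fin n → ℝ) => A.mulVec p.2 i)
          = fun p => ∑ j, A i j * p.2 j := by
        funext p; simp [Matrix.mulVec, dotProduct]
      rw [this]
      exact continuous_finset_sum _ fun j _ =>
        continuous_const.mul ((continuous_apply j).comp continuous_snd)
  have : pfS A = ({p : ℝ × (Fin n → ℝ) | 0 ≤ p.1} ∩ {p | ∀ i, 0 ≤ p.2 i})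
      ∩ ({p | (∑ i, p.2 i) = 1} ∩ {p | ∀ i, p.1 * p.2 i ≤ A.mulVec p.2 i}) := by
    ext p; simp [pfS, Set.mem_inter_iff, and_assoc]
  rw [this]
  exact ((h1.inter h2).inter (h3.inter h4))

lemma pfS_compact (A : Matrix (Fin n) (Fin n) ℝ) (hA : ∀ i j, 0 ≤ A i j) :
    IsCompact (pfS A) := by
  set C : ℝ := ∑ i, ∑ j, A i j with hC
  refine IsCompact.of_isClosed_subset (isCompact_Icc (a := ((0:ℝ), (0 : Fin n → ℝ)))
    (b := (C, 1))) (pfS_closed A) ?_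
  rintro ⟨t, x⟩ ⟨ht, hx, hsum, hineq⟩
  have hx1 : ∀ i, x i ≤ 1 := by
    intro i
    calc x i ≤ ∑ j, x j := Finset.single_le_sum (fun j _ => hx j) (Finset.mem_univ i)
    _ = 1 := hsum
  constructor
  · exact ⟨ht, fun i => hx i⟩
  · constructor
    · calc t = t * ∑ i, x i := by rw [hsum, mul_one]
        _ = ∑ i, t * x i := by rw [Finset.mul_sum]
        _ ≤ ∑ i, A.mulVec x i := Finset.sum_le_sum fun i _ => hineq i
        _ = ∑ i, ∑ j, A i j * x j := by simp [Matrix.mulVec, dotProduct]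
        _ ≤ ∑ i, ∑ j, A i j := by
            refine Finset.sum_le_sum fun i _ => Finset.sum_le_sum fun j _ => ?_
            calc A i j * x j ≤ A i j * 1 := by
                  exact mul_le_mul_of_nonneg_left (hx1 j) (hA i j)
              _ = A i j := mul_one _
    · exact fun i => hx1 i

end main
lemma pf_scale {n : ℕ} (A : Matrix (Fin n) (Fin n) ℝ) {t : ℝ} (ht : 0 ≤ t)
    {u : Fin n → ℝ} (hu : ∀ i, 0 ≤ u i) (hsum : 0 < ∑ i, u i)
    (hineq : ∀ i, t * u i ≤ A.mulVec u i) :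
    (t, (∑ i, u i)⁻¹ • u) ∈ pfS A := by
  set s : ℝ := ∑ i, u i with hs
  have hs0 : s ≠ 0 := ne_of_gt hsum
  have hsinv : 0 ≤ s⁻¹ := le_of_lt (inv_pos.2 hsum)
  refine ⟨ht, fun i => mul_nonneg hsinv (hu i), ?_, fun i => ?_⟩
  · simp only [Pi.smul_apply, smul_eq_mul]
    rw [← Finset.mul_sum, ← hs, inv_mul_cancel₀ hs0]
  · have : A.mulVec (s⁻¹ • u) i = s⁻¹ * A.mulVec u i := by
      rw [Matrix.mulVec_smul]; rfl
    rw [this]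
    simp only [Pi.smul_apply, smul_eq_mul]
    calc t * (s⁻¹ * u i) = s⁻¹ * (t * u i) := by ring
      _ ≤ s⁻¹ * A.mulVec u i := mul_le_mul_of_nonneg_left (hineq i) hsinv

lemma pf_exists_pos {n : ℕ} {u : Fin n → ℝ} (hsum : 0 < ∑ i, u i) :
    ∃ j, 0 < u j := by
  by_contra h
  push_neg at h
  have : (∑ i, u i) ≤ 0 := Finset.sum_nonpos fun i _ => h i
  linarith

/-- positive matrix times nonneg nonzero vector is positive -/
lemma pf_mulVec_pos {n : ℕ} {B : Matrix (Fin n) (Fin n) ℝ} (hB : ∀ i j, 0 < B i j)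
    {u : Fin n → ℝ} (hu : ∀ i, 0 ≤ u i) {j₀ : Fin n} (hj₀ : 0 < u j₀) (i : Fin n) :
    0 < B.mulVec u i := by
  have : B.mulVec u i = ∑ j, B i j * u j := by simp [Matrix.mulVec, dotProduct]
  rw [this]
  exact Finset.sum_pos' (fun j _ => mul_nonneg (le_of_lt (hB i j)) (hu j))
    ⟨j₀, Finset.mem_univ j₀, mul_pos (hB i j₀) hj₀⟩

/-- Perron–Frobenius: an irreducible entrywise-nonnegative square real matrix
has its spectral radius as an eigenvalue, with an associated eigenvector whose
entries are all strictly positive. Irreducibility is expressed by the strong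
connectivity of the associated directed graph: for all `i j` some power of `A`
has a positive `(i,j)` entry. -/
theorem perron_frobenius {n : ℕ} (A : Matrix (Fin n) (Fin n) ℝ)
    (hnonneg : ∀ i j, 0 ≤ A i j)
    (hirred : ∀ i j : Fin n, ∃ k : ℕ, 0 < (A ^ k) i j) :
    ∃ v : Fin n → ℝ, (∀ i, 0 < v i) ∧
      A.mulVec v = (spectralRadius ℂ (A.map (Complex.ofReal))).toReal • v := by
  classical
  rcases Nat.eq_zero_or_pos n with hn | hn
  · subst hn
    exact ⟨fun i => i.elim0, fun i => i.elim0, funext fun i => i.elim0⟩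
  haveI : NeZero n := ⟨by omega⟩
  obtain ⟨B, hBpos, hABcomm⟩ := pf_exists_B A hnonneg hirred
  -- nonemptiness of the feasible set
  have hne : (pfS A).Nonempty := by
    refine ⟨(0, fun _ => (n : ℝ)⁻¹), le_refl 0, fun i => by positivity, ?_, fun i => ?_⟩
    · simp only [Finset.sum_const, Finset.card_univ, Fintype.card_fin, nsmul_eq_mul]
      rw [mul_inv_cancel₀ (by positivity : (n:ℝ) ≠ 0)]
    · have : (0:ℝ) ≤ A.mulVec (fun _ => (n : ℝ)⁻¹) i := by
        have : A.mulVec (fun _ => (n : ℝ)⁻¹) i = ∑ j, A i j * (n:ℝ)⁻¹ := by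
          simp [Matrix.mulVec, dotProduct]
        rw [this]
        exact Finset.sum_nonneg fun j _ => mul_nonneg (hnonneg i j) (by positivity)
      simpa using this
  obtain ⟨⟨r, x⟩, hmem, hmax⟩ :=
    (pfS_compact A hnonneg).exists_isMaxOn hne continuous_fst.continuousOn
  obtain ⟨hr0, hx0, hxsum, hxineq⟩ := hmem
  have hmax' : ∀ p ∈ pfS A, p.1 ≤ r := fun p hp => hmax hp
  simp only at hr0 hx0 hxsum hxineq
  -- x has a positive entry
  obtain ⟨j₁, hj₁⟩ := pf_exists_pos (u := x) (by rw [hxsum]; norm_num)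
  -- z = B x is strictly positive
  set z : Fin n → ℝ := B.mulVec x with hz
  have hzpos : ∀ i, 0 < z i := pf_mulVec_pos hBpos hx0 hj₁
  -- Key: A x = r x
  have hAx : A.mulVec x = r • x := by
    by_contra hne'
    set y : Fin n → ℝ := A.mulVec x - r • x with hy
    have hy0 : ∀ i, 0 ≤ y i := fun i => by
      have := hxineq i
      simp [hy, Pi.sub_apply]
      linarith
    have hyne : ∃ j, 0 < y j := by
      by_contra h
      push_neg at h
      apply hne'
      have : y = 0 := funext fun i => le_antisymm (h i) (hy0 i)
      have := sub_eq_zero.mp (by rw [← hy]; exact this)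
      exact this
    obtain ⟨j₀, hj₀⟩ := hyne
    have hwpos : ∀ i, 0 < B.mulVec y i := pf_mulVec_pos hBpos hy0 hj₀
    -- B y = A z - r z
    have hBy : B.mulVec y = A.mulVec z - r • z := by
      rw [hy, Matrix.mulVec_sub, Matrix.mulVec_smul, hz,
        Matrix.mulVec_mulVec, Matrix.mulVec_mulVec, ← hABcomm]
    have hAz : ∀ i, r * z i < A.mulVec z i := by
      intro i
      have := hwpos i
      rw [hBy] at this
      simp only [Pi.sub_apply, Pi.smul_apply, smul_eq_mul] at this
      linarith
    -- improved ratio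
    set t₁ : ℝ := Finset.univ.inf' Finset.univ_nonempty (fun i => A.mulVec z i / z i) with ht₁
    have hrt₁ : r < t₁ := by
      rw [ht₁, Finset.lt_inf'_iff]
      intro i _
      rw [lt_div_iff₀ (hzpos i)]
      exact hAz i
    have ht₁ineq : ∀ i, t₁ * z i ≤ A.mulVec z i := by
      intro i
      have h1 : t₁ ≤ A.mulVec z i / z i := Finset.inf'_le _ (Finset.mem_univ i)
      rw [le_div_iff₀ (hzpos i)] at h1
      exact h1
    have hzsum : 0 < ∑ i, z i := Finset.sum_pos (fun i _ => hzpos i) Finset.univ_nonempty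
    have := hmax' (t₁, (∑ i, z i)⁻¹ • z)
      (pf_scale A (le_trans hr0 (le_of_lt hrt₁)) (fun i => le_of_lt (hzpos i)) hzsum ht₁ineq)
    simp only at this
    linarith
  -- the positive eigenvector
  have hAz : A.mulVec z = r • z := by
    rw [hz, Matrix.mulVec_mulVec, hABcomm, ← Matrix.mulVec_mulVec, hAx,
      Matrix.mulVec_smul]
  -- now the spectral radius part
  set M : Matrix (Fin n) (Fin n) ℂ := A.map Complex.ofReal with hM
  -- r is in the spectrum of M
  have hrmem : (r : ℂ) ∈ spectrum ℂ M := by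
    rw [spectrum.mem_iff, Matrix.isUnit_iff_isUnit_det, isUnit_iff_ne_zero, not_not,
      ← Matrix.exists_mulVec_eq_zero_iff]
    refine ⟨fun i => (z i : ℂ), ?_, ?_⟩
    · intro h
      have := congrFun h ⟨0, hn⟩
      simp only [Pi.zero_apply, Complex.ofReal_eq_zero] at this
      exact ne_of_gt (hzpos ⟨0, hn⟩) this
    · funext i
      have halg : (algebraMap ℂ (Matrix (Fin n) (Fin n) ℂ)) (r:ℂ) = (r:ℂ) • 1 :=
        Algebra.algebraMap_eq_smul_one _
      rw [Matrix.sub_mulVec, halg, Matrix.smul_mulVec, Matrix.one_mulVec]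
      have hMz : M.mulVec (fun i => (z i : ℂ)) i = ((A.mulVec z i : ℝ) : ℂ) := by
        simp only [hM, Matrix.mulVec, dotProduct, Matrix.map_apply]
        push_cast
        rfl
      simp only [Pi.sub_apply, Pi.smul_apply, smul_eq_mul, Pi.zero_apply, hMz, hAz]
      push_cast
      ring
  -- every spectral value has norm at most r
  have hbound : ∀ μ ∈ spectrum ℂ M, ‖μ‖ ≤ r := by
    intro μ hμ
    rw [spectrum.mem_iff, Matrix.isUnit_iff_isUnit_det, isUnit_iff_ne_zero, not_not,
      ← Matrix.exists_mulVec_eq_zero_iff] at hμ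
    obtain ⟨w, hw0, hww⟩ := hμ
    have halg : (algebraMap ℂ (Matrix (Fin n) (Fin n) ℂ)) μ = μ • 1 :=
      Algebra.algebraMap_eq_smul_one _
    rw [Matrix.sub_mulVec, halg, Matrix.smul_mulVec, Matrix.one_mulVec] at hww
    have hMw : M.mulVec w = μ • w := by
      have := sub_eq_zero.mp hww
      rw [← this]
    set u : Fin n → ℝ := fun i => ‖w i‖ with hu
    have hu0 : ∀ i, 0 ≤ u i := fun i => norm_nonneg _
    have husum : 0 < ∑ i, u i := by
      obtain ⟨j, hj⟩ := Function.ne_iff.mp hw0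
      refine Finset.sum_pos' (fun i _ => hu0 i) ⟨j, Finset.mem_univ j, ?_⟩
      simpa [hu] using hj
    have huineq : ∀ i, ‖μ‖ * u i ≤ A.mulVec u i := by
      intro i
      have h1 : μ * w i = M.mulVec w i := by
        rw [hMw]; rfl
      have h2 : ‖μ * w i‖ = ‖μ‖ * u i := by
        rw [norm_mul]
      have h3 : M.mulVec w i = ∑ j, (A i j : ℂ) * w j := by
        simp [hM, Matrix.mulVec, dotProduct]
      have h4 : ‖∑ j, (A i j : ℂ) * w j‖ ≤ ∑ j, A i j * u j := by
        refine le_trans (norm_sum_le _ _) (Finset.sum_le_sum fun j _ => ?_)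
        rw [norm_mul, Complex.norm_real, Real.norm_eq_abs, abs_of_nonneg (hnonneg i j)]
      have h5 : A.mulVec u i = ∑ j, A i j * u j := by simp [Matrix.mulVec, dotProduct]
      rw [h5, ← h2, h1, h3]
      exact h4
    have := hmax' (‖μ‖, (∑ i, u i)⁻¹ • u) (pf_scale A (norm_nonneg μ) hu0 husum huineq)
    simpa using this
  -- compute the spectral radius
  have hsr : spectralRadius ℂ M = ENNReal.ofReal r := by
    apply le_antisymm
    · refine iSup₂_le fun μ hμ => ?_
      rw [← enorm_eq_nnnorm, ← ofReal_norm]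
      exact ENNReal.ofReal_le_ofReal (hbound μ hμ)
    · have h1 : ENNReal.ofReal r = (‖(r:ℂ)‖₊ : ENNReal) := by
        rw [← enorm_eq_nnnorm, ← ofReal_norm, Complex.norm_real, Real.norm_eq_abs,
          abs_of_nonneg hr0]
      rw [h1]
      exact le_iSup₂ (f := fun μ (_ : μ ∈ spectrum ℂ M) => (‖μ‖₊ : ENNReal)) (r:ℂ) hrmem
  refine ⟨z, hzpos, ?_⟩
  rw [hsr, ENNReal.toReal_ofReal hr0]
  exact hAz
end
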